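/- arXiv:2103.12606 — 2 statements merged into one kernel-verified Lean document; each statement's English description precedes it below -/
import Mathlib

section
/- Let m ≥ 1, let f_0, ..., f_m: F_p → ℂ be 1-bounded functions, and let a_1, ..., a_m ∈ F_p with a_m ≠ 0 and a_m distinct from a_1, ..., a_{m−1}. Then |E_{x,y ∈ F_p} f_0(x) f_1(x + a_1 y) ⋯ f_m(x + a_m y)| ≤ ‖f_m‖_{U^m}, where ‖·‖_{U^m} is the Gowers norm of order m on F_p. -/
open Finset Complex

noncomputable def avg {α : Type*} [Fintype α] (f : α → ℂ) : ℂ :=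
  (∑ x, f x) / (Fintype.card α : ℂ)

noncomputable def avgR {α : Type*} [Fintype α] (f : α → ℝ) : ℝ :=
  (∑ x, f x) / (Fintype.card α : ℝ)

noncomputable def ep (p : ℕ) [NeZero p] (x : ZMod p) : ℂ :=
  Complex.exp (2 * Real.pi * Complex.I * (x.val : ℂ) / (p : ℂ))

noncomputable def conjIt (n : ℕ) (z : ℂ) : ℂ :=
  (fun w : ℂ => (starRingEnd ℂ) w)^[n] z

/-- `2^s`-th power of the Gowers norm of degree `s` along the vector `v`. -/
noncomputable def gowersPow {p D : ℕ} [NeZero p] (s : ℕ) (v : Fin D → ZMod p)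
    (f : (Fin D → ZMod p) → ℂ) : ℂ :=
  avg fun xh : (Fin D → ZMod p) × (Fin s → ZMod p) =>
    ∏ w : Fin s → Bool,
      conjIt (Finset.univ.filter (fun i => w i = true)).card
        (f (xh.1 + (∑ i, if w i then xh.2 i else 0) • v))

/-- `2^s`-th power of the one-dimensional Gowers norm of degree `s` on `F_p`. -/
noncomputable def gowersPow1 {p : ℕ} [NeZero p] (s : ℕ) (g : ZMod p → ℂ) : ℂ :=
  avg fun xh : ZMod p × (Fin s → ZMod p) =>
    ∏ w : Fin s → Bool,
      conjIt (Finset.univ.filter (fun i => w i = true)).card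
        (g (xh.1 + ∑ i, if w i then xh.2 i else 0))

/-- Fourier transform of `f` along `v`. -/
noncomputable def ft {p D : ℕ} [NeZero p] (f : (Fin D → ZMod p) → ℂ)
    (v : Fin D → ZMod p) (x : Fin D → ZMod p) (k : ZMod p) : ℂ :=
  avg fun m : ZMod p => f (x + m • v) * ep p (-(k * m))

/-!
Induction on `m`. Write `Λ` for the average and `Δ_t g(x) = g(x) · conj g(x + t)`. Cauchy–Schwarz
in `x` and expanding the square give `|Λ|² ≤ 𝔼_t |𝔼_{x,y} ∏_{i ≥ 1} Δ_{a_i t} f_i(x + a_i y)|`.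
The substitution `x ↦ x - a_1 y` turns the inner average into a pattern of length `m - 1` with
coefficients `a_i - a_1`, the last of which is nonzero because `a_m ≠ a_1`. By induction and
Jensen in `t`, `|Λ|^{2^m} ≤ 𝔼_t ‖Δ_{a_m t} f_m‖_{U^{m-1}}^{2^{m-1}}`; since `a_m ≠ 0`, `t ↦ a_m t`
is a bijection, and `𝔼_u ‖Δ_u f_m‖_{U^{m-1}}^{2^{m-1}} = ‖f_m‖_{U^m}^{2^m}`. For `m = 1` the
average factors as `𝔼 f₀ · 𝔼 f₁`, and `‖f₁‖_{U^1}² = |𝔼 f₁|²`.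
-/

open scoped BigOperators ComplexConjugate

lemma avg_eq_expect {α : Type*} [Fintype α] (f : α → ℂ) : avg f = 𝔼 x, f x := by
  rw [avg, Fintype.expect_eq_sum_div_card]

lemma Fintype.expect_prod_type {α β M : Type*} [Fintype α] [Fintype β] [AddCommMonoid M]
    [Module ℚ≥0 M] (f : α × β → M) : 𝔼 xy, f xy = 𝔼 x, 𝔼 y, f (x, y) := by
  rw [← Finset.univ_product_univ, Finset.expect_product]

lemma expect_comp_mul_left {F M : Type*} [GroupWithZero F] [Fintype F] [AddCommMonoid M]
    [Module ℚ≥0 M] {c : F} (hc : c ≠ 0) (g : F → M) : 𝔼 y, g (c * y) = 𝔼 y, g y :=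
  Fintype.expect_equiv (Equiv.mulLeft₀ c hc) _ _ fun _ => rfl

lemma Finset.expect_pow_le_expect_pow {ι R : Type*} [Field R] [LinearOrder R]
    [IsStrictOrderedRing R] {s : Finset ι} {f : ι → R} (hf : ∀ i ∈ s, 0 ≤ f i) {n : ℕ}
    (hn : n ≠ 0) : (𝔼 i ∈ s, f i) ^ n ≤ 𝔼 i ∈ s, f i ^ n := by
  obtain ⟨n, rfl⟩ := Nat.exists_eq_succ_of_ne_zero hn
  rw [expect_eq_sum_div_card, expect_eq_sum_div_card, div_pow, pow_succ (#s : R), ← div_div]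
  gcongr
  exact pow_sum_div_card_le_sum_pow hf n

lemma norm_expect_mul_sq_le {α : Type*} [Fintype α] {u : α → ℂ} (hu : ∀ x, ‖u x‖ ≤ 1)
    (v : α → ℂ) : ‖𝔼 x, u x * v x‖ ^ 2 ≤ 𝔼 x, ‖v x‖ ^ 2 := by
  calc ‖𝔼 x, u x * v x‖ ^ 2 ≤ (𝔼 x, ‖v x‖) ^ 2 := by
        gcongr
        refine (RCLike.norm_expect_le (K := ℂ)).trans (Finset.expect_le_expect fun x _ => ?_)
        rw [norm_mul]
        exact mul_le_of_le_one_left (norm_nonneg _) (hu x)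
    _ ≤ 𝔼 x, ‖v x‖ ^ 2 :=
        Finset.expect_pow_le_expect_pow (fun x _ => norm_nonneg _) two_ne_zero

def mulDeriv {G : Type*} [Add G] (t : G) (g : G → ℂ) (x : G) : ℂ := g x * conj (g (x + t))

lemma norm_mulDeriv_le {G : Type*} [Add G] {g : G → ℂ} (hg : ∀ x, ‖g x‖ ≤ 1) (t x : G) :
    ‖mulDeriv t g x‖ ≤ 1 := by
  rw [mulDeriv, norm_mul, Complex.norm_conj]
  exact mul_le_one₀ (hg x) (norm_nonneg _) (hg _)

lemma sq_norm_expect_eq_expect_mulDeriv {G : Type*} [AddGroup G] [Fintype G] (ψ : G → ℂ) :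
    (‖𝔼 y, ψ y‖ ^ 2 : ℂ) = 𝔼 t, 𝔼 y, mulDeriv t ψ y := by
  rw [← Complex.mul_conj', map_expect (starRingEnd ℂ), Finset.expect_mul_expect,
    Finset.expect_comm _ _ fun t y => mulDeriv t ψ y]
  refine Finset.expect_congr rfl fun y _ => ?_
  exact (Fintype.expect_equiv (Equiv.addLeft y) _ _ fun t => rfl).symm

lemma conjIt_eq_pow (n : ℕ) (z : ℂ) : conjIt n z = ((starRingEnd ℂ) ^ n) z := rfl

lemma conjIt_succ (n : ℕ) (z : ℂ) : conjIt (n + 1) z = conjIt n (conj z) :=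
  Function.iterate_succ_apply _ n z

lemma card_filter_fin_cons {s : ℕ} (b : Bool) (w : Fin s → Bool) :
    #{i | (Fin.cons b w : Fin (s + 1) → Bool) i = true} = #{i | w i = true} + b.toNat := by
  rw [Finset.card_filter, Finset.card_filter, Fin.sum_univ_succ]
  cases b <;> simp [add_comm]

lemma sum_ite_fin_cons {s : ℕ} {M : Type*} [AddCommMonoid M] (b : Bool) (w : Fin s → Bool)
    (t : M) (h : Fin s → M) :
    ∑ i, (if (Fin.cons b w : Fin (s + 1) → Bool) i then (Fin.cons t h : Fin (s + 1) → M) i else 0)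
      = (if b then t else 0) + ∑ i, if w i then h i else 0 := by
  rw [Fin.sum_univ_succ]
  simp

section Cube

variable {G : Type*} [AddCommMonoid G]

noncomputable def cubeProd (s : ℕ) (g : G → ℂ) (x : G) (h : Fin s → G) : ℂ :=
  ∏ w : Fin s → Bool, conjIt #{i | w i = true} (g (x + ∑ i, if w i then h i else 0))

lemma cubeProd_zero (g : G → ℂ) (x : G) (h : Fin 0 → G) : cubeProd 0 g x h = g x := by
  simp [cubeProd, conjIt]

lemma cubeProd_cons (s : ℕ) (g : G → ℂ) (x t : G) (h : Fin s → G) :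
    cubeProd (s + 1) g x (Fin.cons t h) = cubeProd s (mulDeriv t g) x h := by
  rw [cubeProd, ← (Fin.consEquiv fun _ => Bool).prod_comp, Fintype.prod_prod_type,
    Finset.prod_comm, cubeProd]
  refine Finset.prod_congr rfl fun w _ => ?_
  simp only [Fin.consEquiv_apply, card_filter_fin_cons, sum_ite_fin_cons, Fintype.prod_bool,
    Bool.toNat_true, Bool.toNat_false, if_true, Bool.false_eq_true, if_false, zero_add, add_zero]
  rw [conjIt_succ, mul_comm, conjIt_eq_pow, conjIt_eq_pow, ← map_mul, ← conjIt_eq_pow, mulDeriv,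
    ← add_assoc, add_right_comm]

end Cube

section Gowers

variable {p : ℕ} [NeZero p]

lemma gowersPow1_eq_expect (s : ℕ) (g : ZMod p → ℂ) :
    gowersPow1 s g = 𝔼 x, 𝔼 h, cubeProd s g x h := by
  rw [gowersPow1, avg_eq_expect, Fintype.expect_prod_type]
  rfl

lemma gowersPow1_zero (g : ZMod p → ℂ) : gowersPow1 0 g = 𝔼 x, g x := by
  simp [gowersPow1_eq_expect, cubeProd_zero]

lemma gowersPow1_succ (s : ℕ) (g : ZMod p → ℂ) :
    gowersPow1 (s + 1) g = 𝔼 t, gowersPow1 s (mulDeriv t g) := by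
  have hcons (x : ZMod p) :
      𝔼 h, cubeProd (s + 1) g x h = 𝔼 t, 𝔼 h, cubeProd s (mulDeriv t g) x h := by
    calc 𝔼 h, cubeProd (s + 1) g x h
        = 𝔼 th : ZMod p × (Fin s → ZMod p), cubeProd s (mulDeriv th.1 g) x th.2 :=
          (Fintype.expect_equiv (Fin.consEquiv fun _ => ZMod p) _ _
            fun th => (cubeProd_cons s g x th.1 th.2).symm).symm
      _ = _ := Fintype.expect_prod_type _
  simp_rw [gowersPow1_eq_expect, hcons]
  exact Finset.expect_comm _ _ _

lemma gowersPow1_one (g : ZMod p → ℂ) : gowersPow1 1 g = (‖𝔼 x, g x‖ ^ 2 : ℂ) := by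
  simp_rw [gowersPow1_succ, gowersPow1_zero, sq_norm_expect_eq_expect_mulDeriv]

end Gowers

section Pattern

variable {R : Type*} [CommRing R] [Fintype R] {m : ℕ}

noncomputable def patternAvg (f0 : R → ℂ) (f : Fin m → R → ℂ) (a : Fin m → R) : ℂ :=
  𝔼 x, 𝔼 y, f0 x * ∏ i, f i (x + a i * y)

lemma norm_patternAvg_sq_le {f0 : R → ℂ} (hf0 : ∀ x, ‖f0 x‖ ≤ 1) (f : Fin m → R → ℂ)
    (a : Fin m → R) :
    ‖patternAvg f0 f a‖ ^ 2 ≤ 𝔼 t, ‖patternAvg 1 (fun i => mulDeriv (a i * t) (f i)) a‖ := by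
  set Φ : R → R → ℂ := fun x y => ∏ i, f i (x + a i * y)
  have hΦ (x y t : R) :
      mulDeriv t (Φ x) y = ∏ i, mulDeriv (a i * t) (f i) (x + a i * y) := by
    simp only [Φ, map_prod, ← Finset.prod_mul_distrib, mulDeriv, mul_add, add_assoc]
  calc ‖patternAvg f0 f a‖ ^ 2 = ‖𝔼 x, f0 x * 𝔼 y, Φ x y‖ ^ 2 := by
        simp only [patternAvg, Finset.mul_expect, Φ]
    _ ≤ 𝔼 x, ‖𝔼 y, Φ x y‖ ^ 2 := norm_expect_mul_sq_le hf0 _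
    _ = (𝔼 x, (‖𝔼 y, Φ x y‖ ^ 2 : ℂ)).re := by
        simp only [Complex.re_expect, ← Complex.ofReal_pow, Complex.ofReal_re]
    _ = (𝔼 t, patternAvg 1 (fun i => mulDeriv (a i * t) (f i)) a).re := by
        simp only [sq_norm_expect_eq_expect_mulDeriv, hΦ, patternAvg, Pi.one_apply, one_mul]
        rw [Finset.expect_comm]
    _ ≤ 𝔼 t, ‖patternAvg 1 (fun i => mulDeriv (a i * t) (f i)) a‖ :=
        (Complex.re_le_norm _).trans (RCLike.norm_expect_le (K := ℂ))

lemma patternAvg_one_fin_succ (D : Fin (m + 1) → R → ℂ) (a : Fin (m + 1) → R) :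
    patternAvg 1 D a = patternAvg (D 0) (fun j => D j.succ) (fun j => a j.succ - a 0) := by
  unfold patternAvg
  conv_lhs => rw [Finset.expect_comm]
  conv_rhs => rw [Finset.expect_comm]
  refine Finset.expect_congr rfl fun y _ => ?_
  refine (Fintype.expect_equiv (Equiv.subRight (a 0 * y)) _ _ fun x => ?_).symm
  simp only [Equiv.subRight_apply, Pi.one_apply, one_mul, Fin.prod_univ_succ]
  congr 1
  · ring_nf
  · refine Finset.prod_congr rfl fun j _ => ?_
    ring_nf

end Pattern

lemma patternAvg_fin_one {F : Type*} [Field F] [Fintype F] (f0 : F → ℂ) (f : Fin 1 → F → ℂ)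
    {a : Fin 1 → F} (ha : a 0 ≠ 0) : patternAvg f0 f a = (𝔼 x, f0 x) * 𝔼 x, f 0 x := by
  rw [patternAvg, Finset.expect_mul]
  refine Finset.expect_congr rfl fun x _ => ?_
  simp only [Fin.prod_univ_one]
  rw [← Finset.mul_expect, expect_comp_mul_left ha fun y => f 0 (x + y)]
  exact congrArg _ (Fintype.expect_equiv (Equiv.addLeft x) _ _ fun _ => rfl)

theorem norm_patternAvg_pow_le {p : ℕ} [Fact p.Prime] (n : ℕ) {f0 : ZMod p → ℂ}
    {f : Fin (n + 1) → ZMod p → ℂ} (hf0 : ∀ x, ‖f0 x‖ ≤ 1)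
    (hf : ∀ (i : Fin n) x, ‖f i.castSucc x‖ ≤ 1) {a : Fin (n + 1) → ZMod p}
    (ha : a (Fin.last n) ≠ 0) (hdist : ∀ i : Fin n, a i.castSucc ≠ a (Fin.last n)) :
    ‖patternAvg f0 f a‖ ^ 2 ^ (n + 1) ≤ (gowersPow1 (n + 1) (f (Fin.last n))).re := by
  induction n generalizing f0 with
  | zero =>
    have hf0_avg : ‖𝔼 x, f0 x‖ ≤ 1 := (RCLike.norm_expect_le (K := ℂ)).trans
      (Finset.expect_le Finset.univ_nonempty fun x _ => hf0 x)
    rw [patternAvg_fin_one f0 f ha, gowersPow1_one, norm_mul, mul_pow, ← Complex.ofReal_pow,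
      Complex.ofReal_re]
    exact mul_le_of_le_one_left (by positivity) (pow_le_one₀ (norm_nonneg _) hf0_avg)
  | succ n ih =>
    set D : ZMod p → Fin (n + 2) → ZMod p → ℂ := fun t i => mulDeriv (a i * t) (f i)
    have hD (t : ZMod p) : ‖patternAvg 1 (D t) a‖ ^ 2 ^ (n + 1) ≤
        (gowersPow1 (n + 1) (mulDeriv (a (Fin.last (n + 1)) * t) (f (Fin.last (n + 1))))).re := by
      rw [patternAvg_one_fin_succ]
      exact ih (norm_mulDeriv_le (hf 0) _) (fun i => norm_mulDeriv_le (hf i.succ) _)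
        (sub_ne_zero.2 (hdist 0).symm) (fun i h => hdist i.succ (sub_left_injective h))
    calc ‖patternAvg f0 f a‖ ^ 2 ^ (n + 2) = (‖patternAvg f0 f a‖ ^ 2) ^ 2 ^ (n + 1) := by
          rw [← pow_mul, pow_succ' 2 (n + 1)]
      _ ≤ (𝔼 t, ‖patternAvg 1 (D t) a‖) ^ 2 ^ (n + 1) := by
          gcongr
          exact norm_patternAvg_sq_le hf0 f a
      _ ≤ 𝔼 t, ‖patternAvg 1 (D t) a‖ ^ 2 ^ (n + 1) :=
          Finset.expect_pow_le_expect_pow (fun _ _ => norm_nonneg _) (by positivity)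
      _ ≤ 𝔼 t, (gowersPow1 (n + 1)
            (mulDeriv (a (Fin.last (n + 1)) * t) (f (Fin.last (n + 1))))).re :=
          Finset.expect_le_expect fun t _ => hD t
      _ = 𝔼 u, (gowersPow1 (n + 1) (mulDeriv u (f (Fin.last (n + 1))))).re :=
          expect_comp_mul_left ha fun u => (gowersPow1 (n + 1) (mulDeriv u _)).re
      _ = (gowersPow1 (n + 2) (f (Fin.last (n + 1)))).re := by
          rw [gowersPow1_succ, Complex.re_expect]

theorem stmt11 {p : ℕ} [Fact p.Prime] (m : ℕ) (hm : 1 ≤ m)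
    (f0 : ZMod p → ℂ) (f : Fin m → ZMod p → ℂ)
    (hf0 : ∀ x, ‖f0 x‖ ≤ 1) (hf : ∀ i x, ‖f i x‖ ≤ 1)
    (a : Fin m → ZMod p)
    (ham : a ⟨m - 1, by omega⟩ ≠ 0)
    (hdist : ∀ i : Fin m, (i : ℕ) < m - 1 → a ⟨m - 1, by omega⟩ ≠ a i) :
    ‖avg fun xy : ZMod p × ZMod p =>
        f0 xy.1 * ∏ i : Fin m, f i (xy.1 + a i * xy.2)‖
      ≤ (gowersPow1 m (f ⟨m - 1, by omega⟩)).re ^ (((2 : ℝ) ^ m)⁻¹) := by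
  obtain ⟨n, rfl⟩ : ∃ n, m = n + 1 := ⟨m - 1, by omega⟩
  have hlast : (⟨n + 1 - 1, by omega⟩ : Fin (n + 1)) = Fin.last n :=
    Fin.ext (Nat.add_sub_cancel n 1)
  rw [hlast] at ham hdist ⊢
  have hbound := norm_patternAvg_pow_le n hf0 (fun i => hf i.castSucc) ham
    fun i => (hdist i.castSucc (by simp)).symm
  have hexp : (2 : ℝ) ^ (n + 1) = ((2 ^ (n + 1) : ℕ) : ℝ) := by push_cast; rfl
  rw [avg_eq_expect, Fintype.expect_prod_type, Real.le_rpow_inv_iff_of_pos (norm_nonneg _)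
    ((by positivity : (0 : ℝ) ≤ _).trans hbound) (by positivity), hexp, Real.rpow_natCast]
  exact hbound
end

section
/- Let t ≥ 1, let v_1, ..., v_t ∈ F_p^D be nonzero vectors, and let f: F_p^D → [0, ∞) be a nonnegative function. Then E_{x ∈ F_p^D} ∏_{i=0}^{t} E(f|V_i)(x) ≥ (E_{x ∈ F_p^D} f(x))^{t+1}, where V_0 = {0} (so E(f|V_0) = f) and E(f|V_i)(x) = E_{y ∈ F_p} f(x + v_i y). -/
open Finset Complex

theorem stmt12 {p D : ℕ} [Fact p.Prime] [NeZero p] (hD : 1 ≤ D) (t : ℕ) (ht : 1 ≤ t)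
    (v : Fin t → (Fin D → ZMod p)) (hv : ∀ i, v i ≠ 0)
    (f : (Fin D → ZMod p) → ℝ) (hf : ∀ x, 0 ≤ f x) :
    (avgR f) ^ (t + 1) ≤
      avgR fun x : Fin D → ZMod p =>
        f x * ∏ i : Fin t, avgR fun y : ZMod p => f (x + y • v i) := by
  classical
  have hq0 : (0:ℝ) < (p:ℝ) := by exact_mod_cast (Fact.out : p.Prime).pos
  set N : ℝ := (Fintype.card (Fin D → ZMod p) : ℝ) with hNdef
  have hN0 : (0:ℝ) < N := by
    have h : 0 < Fintype.card (Fin D → ZMod p) := Fintype.card_pos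
    simp only [hNdef]
    exact_mod_cast h
  set g : Fin t → (Fin D → ZMod p) → ℝ :=
    fun i x => avgR fun y : ZMod p => f (x + y • v i) with hgdef
  have hgsum : ∀ (i : Fin t) (x), (p:ℝ) * g i x = ∑ y : ZMod p, f (x + y • v i) := by
    intro i x
    have hc : (Fintype.card (ZMod p) : ℝ) = (p:ℝ) := by rw [ZMod.card]
    simp only [hgdef, avgR, hc]
    field_simp
  have hg0 : ∀ (i : Fin t) (x), 0 ≤ g i x := by
    intro i x
    simp only [hgdef, avgR]
    exact div_nonneg (Finset.sum_nonneg fun y _ => hf _) (Nat.cast_nonneg _)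
  have hfg : ∀ (i : Fin t) (x), f x ≤ (p:ℝ) * g i x := by
    intro i x
    rw [hgsum]
    have h0 : f x = f (x + (0 : ZMod p) • v i) := by rw [zero_smul, add_zero]
    rw [h0]
    exact Finset.single_le_sum (f := fun y : ZMod p => f (x + y • v i))
      (fun y _ => hf _) (Finset.mem_univ (0 : ZMod p))
  have hgpos : ∀ (i : Fin t) (x), 0 < f x → 0 < g i x := by
    intro i x hx
    nlinarith [hfg i x, hg0 i x]
  have hginv : ∀ (i : Fin t) (x) (c : ZMod p), g i (x + c • v i) = g i x := by
    intro i x c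
    have hs : ∑ y : ZMod p, f (x + c • v i + y • v i) = ∑ y : ZMod p, f (x + y • v i) := by
      refine (Fintype.sum_equiv (Equiv.subRight c) _ _ ?_).symm
      intro y
      congr 1
      simp only [Equiv.subRight_apply]
      rw [sub_smul]
      abel
    have h1 := hgsum i (x + c • v i)
    rw [hs, ← hgsum i x] at h1
    exact mul_left_cancel₀ (ne_of_gt hq0) h1
  set A : ℝ := ∑ x, f x * ∏ i, g i x with hAdef
  set B : Fin t → ℝ := fun i => ∑ x, f x / g i x with hBdef
  have hA0 : 0 ≤ A :=
    Finset.sum_nonneg fun x _ =>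
      mul_nonneg (hf x) (Finset.prod_nonneg fun i _ => hg0 i x)
  have hB0 : ∀ i, 0 ≤ B i := fun i =>
    Finset.sum_nonneg fun x _ => div_nonneg (hf x) (hg0 i x)
  -- B i ≤ N
  have hBle : ∀ i, B i ≤ N := by
    intro i
    have key : ∀ c : ZMod p, B i = ∑ x, f (x + c • v i) / g i x := by
      intro c
      have e1 : B i = ∑ x, f (x + c • v i) / g i (x + c • v i) :=
        (Equiv.sum_comp (Equiv.addRight (c • v i)) (fun x => f x / g i x)).symm
      rw [e1]
      exact Finset.sum_congr rfl fun x _ => by rw [hginv]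
    have h2 : (p:ℝ) * B i = ∑ x, ((p:ℝ) * g i x) / g i x := by
      calc (p:ℝ) * B i = ∑ _c : ZMod p, B i := by
            rw [Finset.sum_const, Finset.card_univ, ZMod.card, nsmul_eq_mul]
        _ = ∑ c : ZMod p, ∑ x, f (x + c • v i) / g i x :=
            Finset.sum_congr rfl fun c _ => key c
        _ = ∑ x, ∑ c : ZMod p, f (x + c • v i) / g i x := Finset.sum_comm
        _ = ∑ x, (∑ c : ZMod p, f (x + c • v i)) / g i x := by
            exact Finset.sum_congr rfl fun x _ => (Finset.sum_div _ _ _).symm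
        _ = ∑ x, ((p:ℝ) * g i x) / g i x := by
            exact Finset.sum_congr rfl fun x _ => by rw [hgsum]
    have h3 : ∑ x, ((p:ℝ) * g i x) / g i x ≤ ∑ _x : Fin D → ZMod p, (p:ℝ) := by
      refine Finset.sum_le_sum fun x _ => ?_
      rcases eq_or_ne (g i x) 0 with h | h
      · rw [h, mul_zero, zero_div]; exact hq0.le
      · rw [mul_div_assoc, div_self h, mul_one]
    have h4 : (∑ _x : Fin D → ZMod p, (p:ℝ)) = N * p := by
      rw [Finset.sum_const, Finset.card_univ, nsmul_eq_mul]
    have : (p:ℝ) * B i ≤ (p:ℝ) * N := by rw [h2]; rw [h4] at h3; linarith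
    exact le_of_mul_le_mul_left this hq0
  -- pointwise factorization
  have hkey : ∀ x, f x ^ (t+1) = (f x * ∏ i, g i x) * ∏ i, f x / g i x := by
    intro x
    rcases eq_or_lt_of_le (hf x) with h | h
    · rw [← h]
      simp
    · have hgne : ∀ i : Fin t, g i x ≠ 0 := fun i => ne_of_gt (hgpos i x h)
      have hP : (∏ i, g i x) ≠ 0 := Finset.prod_ne_zero_iff.mpr fun i _ => hgne i
      rw [Finset.prod_div_distrib, Finset.prod_const, Finset.card_univ, Fintype.card_fin]
      field_simp
      ring
  -- Hölder: (∑ f)^(t+1) ≤ A * ∏ B i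
  have holder : (∑ x, f x) ^ (t+1) ≤ A * ∏ i, B i := by
    by_cases hz : ∀ x, f x = 0
    · have h0 : (∑ x, f x) = 0 := Finset.sum_eq_zero fun x _ => hz x
      rw [h0, zero_pow (Nat.succ_ne_zero t)]
      exact mul_nonneg hA0 (Finset.prod_nonneg fun i _ => hB0 i)
    · push_neg at hz
      obtain ⟨x₀, hx₀⟩ := hz
      have hfx₀ : 0 < f x₀ := (hf x₀).lt_of_ne (Ne.symm hx₀)
      have hApos : 0 < A :=
        Finset.sum_pos' (fun x _ => mul_nonneg (hf x) (Finset.prod_nonneg fun i _ => hg0 i x))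
          ⟨x₀, Finset.mem_univ _,
            mul_pos hfx₀ (Finset.prod_pos fun i _ => hgpos i x₀ hfx₀)⟩
      have hBpos : ∀ i, 0 < B i := fun i =>
        Finset.sum_pos' (fun x _ => div_nonneg (hf x) (hg0 i x))
          ⟨x₀, Finset.mem_univ _, div_pos hfx₀ (hgpos i x₀ hfx₀)⟩
      set C : ℝ := A * ∏ i, B i with hCdef
      have hCpos : 0 < C := mul_pos hApos (Finset.prod_pos fun i _ => hBpos i)
      set n : ℕ := t + 1 with hndef
      have hn0 : ((n:ℝ)) ≠ 0 := by positivity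
      set z : (Fin D → ZMod p) → Fin n → ℝ :=
        fun x => Fin.cons ((f x * ∏ i, g i x) / A) (fun i => (f x / g i x) / B i) with hzdef
      have hz0 : ∀ x j, 0 ≤ z x j := by
        intro x j
        refine Fin.cases ?_ ?_ j
        · simp only [hzdef, Fin.cons_zero]
          exact div_nonneg (mul_nonneg (hf x) (Finset.prod_nonneg fun i _ => hg0 i x)) hApos.le
        · intro i
          simp only [hzdef, Fin.cons_succ]
          exact div_nonneg (div_nonneg (hf x) (hg0 i x)) (hBpos i).le
      have hzprod : ∀ x, (∏ j, z x j) = f x ^ n / C := by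
        intro x
        simp only [hzdef]
        rw [Fin.prod_cons, Finset.prod_div_distrib, div_mul_div_comm, ← hkey x, hCdef]
      have amgm : ∀ x, f x / C ^ ((n:ℝ)⁻¹) ≤ ∑ j : Fin n, (n:ℝ)⁻¹ * z x j := by
        intro x
        have h1 := Real.geom_mean_le_arith_mean_weighted Finset.univ
          (fun _ : Fin n => (n:ℝ)⁻¹) (z x) (fun j _ => by positivity)
          (by rw [Finset.sum_const, Finset.card_univ, Fintype.card_fin, nsmul_eq_mul,
                mul_inv_cancel₀ hn0])
          (fun j _ => hz0 x j)
        calc f x / C ^ ((n:ℝ)⁻¹) = (∏ j, z x j) ^ ((n:ℝ)⁻¹) := by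
              rw [hzprod, Real.div_rpow (pow_nonneg (hf x) n) hCpos.le]
              congr 1
              rw [← Real.rpow_natCast (f x) n, ← Real.rpow_mul (hf x),
                mul_inv_cancel₀ hn0, Real.rpow_one]
          _ = ∏ j, (z x j) ^ ((n:ℝ)⁻¹) :=
              (Real.finset_prod_rpow Finset.univ (z x) (fun j _ => hz0 x j) _).symm
          _ ≤ ∑ j, (n:ℝ)⁻¹ * z x j := h1
      have hsum : (∑ x, f x) / C ^ ((n:ℝ)⁻¹) ≤ 1 := by
        have h2 : ∑ x, (f x / C ^ ((n:ℝ)⁻¹)) ≤ ∑ x, ∑ j : Fin n, (n:ℝ)⁻¹ * z x j :=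
          Finset.sum_le_sum fun x _ => amgm x
        have h3 : ∑ x, ∑ j : Fin n, (n:ℝ)⁻¹ * z x j = 1 := by
          rw [Finset.sum_comm]
          have h4 : ∀ j : Fin n, ∑ x, z x j = 1 := by
            intro j
            refine Fin.cases ?_ ?_ j
            · simp only [hzdef, Fin.cons_zero]
              rw [← Finset.sum_div, ← hAdef, div_self hApos.ne']
            · intro i
              simp only [hzdef, Fin.cons_succ]
              rw [← Finset.sum_div]
              show B i / B i = 1
              exact div_self (hBpos i).ne'
          have : ∀ j : Fin n, ∑ x, (n:ℝ)⁻¹ * z x j = (n:ℝ)⁻¹ := by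
            intro j
            rw [← Finset.mul_sum, h4 j, mul_one]
          rw [Finset.sum_congr rfl fun j _ => this j, Finset.sum_const, Finset.card_univ,
            Fintype.card_fin, nsmul_eq_mul, mul_inv_cancel₀ hn0]
        rw [← Finset.sum_div] at h2
        rw [h3] at h2
        exact h2
      have hCr : 0 < C ^ ((n:ℝ)⁻¹) := Real.rpow_pos_of_pos hCpos _
      have h5 : (∑ x, f x) ≤ C ^ ((n:ℝ)⁻¹) := by
        rw [div_le_one hCr] at hsum
        exact hsum
      have h6 : (∑ x, f x) ^ n ≤ (C ^ ((n:ℝ)⁻¹)) ^ n :=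
        pow_le_pow_left₀ (Finset.sum_nonneg fun x _ => hf x) h5 n
      have h7 : (C ^ ((n:ℝ)⁻¹)) ^ n = C := by
        rw [← Real.rpow_natCast (C ^ ((n:ℝ)⁻¹)) n, ← Real.rpow_mul hCpos.le,
          inv_mul_cancel₀ hn0, Real.rpow_one]
      rw [h7] at h6
      exact h6
  -- assemble
  have hprodB : (∏ i, B i) ≤ N ^ t := by
    calc (∏ i, B i) ≤ ∏ _i : Fin t, N :=
          Finset.prod_le_prod (fun i _ => hB0 i) (fun i _ => hBle i)
      _ = N ^ t := by rw [Finset.prod_const, Finset.card_univ, Fintype.card_fin]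
  have hmain : (∑ x, f x) ^ (t+1) ≤ A * N ^ t :=
    le_trans holder (mul_le_mul_of_nonneg_left hprodB hA0)
  have hgoal : (avgR fun x => f x * ∏ i, avgR fun y : ZMod p => f (x + y • v i))
      = A / N := rfl
  rw [hgoal]
  have hlhs : avgR f = (∑ x, f x) / N := rfl
  rw [hlhs, div_pow, div_le_div_iff₀ (by positivity) hN0]
  calc (∑ x, f x) ^ (t+1) * N ≤ (A * N ^ t) * N :=
        mul_le_mul_of_nonneg_right hmain hN0.le
    _ = A * N ^ (t+1) := by ring
end
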